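/- arXiv:2109.14926 — 3 statements merged into one kernel-verified Lean document; each statement's English description precedes it below -/
import Mathlib

section
/- Let σ : Λ → ℂ be conjugate-symmetric, Ψ : Z_N² → ℝ strictly positive, q ∈ ℒ₊, and let Δ : Λ → ℂ be conjugate-symmetric. Then the second derivative at t = 0 of the real function t ↦ J(q + tΔ) exists and equals (1/(N₁N₂)) Σ_{ℓ∈Z_N²} Δ(ζ_ℓ)² / (1/Ψ(ℓ) + Q(ζ_ℓ))², where Δ(ζ_ℓ) = Σ_{k∈Λ} Δ_k exp(−i(k₁ζ_{ℓ,1} + k₂ζ_{ℓ,2})); in particular this second derivative is nonnegative. -/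
open Complex BigOperators

noncomputable section

/-- The index set `Λ = {k ∈ ℤ² : |k₁| ≤ n₁, |k₂| ≤ n₂}`. -/
def Lam (n₁ n₂ : ℕ) : Finset (ℤ × ℤ) :=
  Finset.Icc (-(n₁ : ℤ)) (n₁ : ℤ) ×ˢ Finset.Icc (-(n₂ : ℤ)) (n₂ : ℤ)

/-- The discrete grid `Z_N² = {0,…,N₁−1} × {0,…,N₂−1}`. -/
def gridN (N₁ N₂ : ℕ) : Finset (ℕ × ℕ) := Finset.range N₁ ×ˢ Finset.range N₂

/-- The grid point `ζ_ℓ = (2πℓ₁/N₁, 2πℓ₂/N₂)`. -/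
def zeta (N₁ N₂ : ℕ) (ℓ : ℕ × ℕ) : ℝ × ℝ :=
  (2 * Real.pi * ℓ.1 / N₁, 2 * Real.pi * ℓ.2 / N₂)

/-- Conjugate symmetry of coefficients: `q₋ₖ = conj qₖ` for all `k ∈ Λ`. -/
def ConjSym (n₁ n₂ : ℕ) (q : ℤ × ℤ → ℂ) : Prop :=
  ∀ k ∈ Lam n₁ n₂, q (-k) = starRingEnd ℂ (q k)

/-- The trigonometric polynomial `Q(θ) = Σ_{k∈Λ} qₖ exp(−i(k₁θ₁ + k₂θ₂))`. -/
def trigQ (n₁ n₂ : ℕ) (q : ℤ × ℤ → ℂ) (θ : ℝ × ℝ) : ℂ :=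
  ∑ k ∈ Lam n₁ n₂, q k *
    Complex.exp (-Complex.I * (((k.1 : ℝ) * θ.1 + (k.2 : ℝ) * θ.2 : ℝ) : ℂ))

/-- The dual objective `J(q)`, real-valued on the feasible set. -/
def Jdual (n₁ n₂ N₁ N₂ : ℕ) (σ : ℤ × ℤ → ℂ) (Ψ : ℕ × ℕ → ℝ) (q : ℤ × ℤ → ℂ) : ℝ :=
  (∑ k ∈ Lam n₁ n₂, q k * starRingEnd ℂ (σ k)).re -
    (1 / ((N₁ : ℝ) * (N₂ : ℝ))) * ∑ ℓ ∈ gridN N₁ N₂,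
      Real.log (1 / Ψ ℓ + (trigQ n₁ n₂ q (zeta N₁ N₂ ℓ)).re)

/-- Membership in the feasible set `ℒ₊`. -/
def Feas (n₁ n₂ N₁ N₂ : ℕ) (Ψ : ℕ × ℕ → ℝ) (q : ℤ × ℤ → ℂ) : Prop :=
  ConjSym n₁ n₂ q ∧
    ∀ ℓ ∈ gridN N₁ N₂, 0 < 1 / Ψ ℓ + (trigQ n₁ n₂ q (zeta N₁ N₂ ℓ)).re

/-!
Along the line `t ↦ q + tΔ` the linear term of `J` is affine in `t` and every logarithm is the
logarithm of an affine function `c_ℓ + t d_ℓ`, with `c_ℓ = 1/Ψ(ℓ) + Q(ζ_ℓ)` and `d_ℓ = Δ(ζ_ℓ)`.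
Hence `J(q + tΔ) = a + t b - w Σ_ℓ log (c_ℓ + t d_ℓ)`, whose first derivative
`b - w Σ_ℓ d_ℓ / (c_ℓ + t d_ℓ)` is valid on the open set where all `c_ℓ + t d_ℓ > 0`, a
neighbourhood of `0` since `q ∈ ℒ₊`; differentiating once more gives `w Σ_ℓ d_ℓ² / c_ℓ²`.
-/

theorem hasDerivAt_const_add_mul (a b t : ℝ) : HasDerivAt (fun t => a + t * b) b t := by
  simpa using ((hasDerivAt_id t).mul_const b).const_add a

section AffineLogSum

variable {ι : Type*} (s : Finset ι) (c d : ι → ℝ)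

theorem hasDerivAt_sum_log_affine {t : ℝ} (h : ∀ i ∈ s, 0 < c i + t * d i) :
    HasDerivAt (fun t => ∑ i ∈ s, Real.log (c i + t * d i))
      (∑ i ∈ s, d i / (c i + t * d i)) t :=
  HasDerivAt.fun_sum fun i hi => (hasDerivAt_const_add_mul (c i) (d i) t).log (h i hi).ne'

theorem hasDerivAt_sum_div_affine {t : ℝ} (h : ∀ i ∈ s, c i + t * d i ≠ 0) :
    HasDerivAt (fun t => ∑ i ∈ s, d i / (c i + t * d i))
      (-∑ i ∈ s, d i ^ 2 / (c i + t * d i) ^ 2) t := by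
  rw [← Finset.sum_neg_distrib]
  exact HasDerivAt.fun_sum fun i hi =>
    ((hasDerivAt_const t (d i)).fun_div (hasDerivAt_const_add_mul (c i) (d i) t)
      (h i hi)).congr_deriv (by ring)

theorem hasDerivAt_deriv_affine_sub_sum_log (a b w : ℝ) {t₀ : ℝ}
    (h : ∀ i ∈ s, 0 < c i + t₀ * d i) :
    HasDerivAt (deriv fun t => a + t * b - w * ∑ i ∈ s, Real.log (c i + t * d i))
      (w * ∑ i ∈ s, d i ^ 2 / (c i + t₀ * d i) ^ 2) t₀ := by
  have hpos : ∀ᶠ t in nhds t₀, ∀ i ∈ s, 0 < c i + t * d i := by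
    rw [Filter.eventually_all_finset]
    intro i hi
    exact (continuous_const.add (continuous_id.mul continuous_const)).continuousAt.eventually
      (eventually_gt_nhds (h i hi))
  have hderiv : (deriv fun t => a + t * b - w * ∑ i ∈ s, Real.log (c i + t * d i)) =ᶠ[nhds t₀]
      fun t => b - w * ∑ i ∈ s, d i / (c i + t * d i) := by
    filter_upwards [hpos] with t ht
    exact ((hasDerivAt_const_add_mul a b t).sub
      ((hasDerivAt_sum_log_affine s c d ht).const_mul w)).deriv
  refine HasDerivAt.congr_of_eventuallyEq ?_ hderiv
  exact (((hasDerivAt_sum_div_affine s c d fun i hi => (h i hi).ne').const_mul w).const_sub b)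
    |>.congr_deriv (by ring)

end AffineLogSum

theorem trigQ_add_mul (n₁ n₂ : ℕ) (q Δ : ℤ × ℤ → ℂ) (z : ℂ) (θ : ℝ × ℝ) :
    trigQ n₁ n₂ (fun k => q k + z * Δ k) θ = trigQ n₁ n₂ q θ + z * trigQ n₁ n₂ Δ θ := by
  simp only [trigQ, add_mul, Finset.sum_add_distrib, Finset.mul_sum, mul_assoc]

theorem Jdual_add_mul (n₁ n₂ N₁ N₂ : ℕ) (σ : ℤ × ℤ → ℂ) (Ψ : ℕ × ℕ → ℝ)
    (q Δ : ℤ × ℤ → ℂ) (t : ℝ) :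
    Jdual n₁ n₂ N₁ N₂ σ Ψ (fun k => q k + (t : ℂ) * Δ k) =
      (∑ k ∈ Lam n₁ n₂, q k * starRingEnd ℂ (σ k)).re +
        t * (∑ k ∈ Lam n₁ n₂, Δ k * starRingEnd ℂ (σ k)).re -
      (1 / ((N₁ : ℝ) * (N₂ : ℝ))) * ∑ ℓ ∈ gridN N₁ N₂,
        Real.log ((1 / Ψ ℓ + (trigQ n₁ n₂ q (zeta N₁ N₂ ℓ)).re) +
          t * (trigQ n₁ n₂ Δ (zeta N₁ N₂ ℓ)).re) := by
  simp only [Jdual, trigQ_add_mul, add_mul, Finset.sum_add_distrib, mul_assoc, ← Finset.mul_sum,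
    add_re, re_ofReal_mul, add_assoc]

theorem stmt7_general (n₁ n₂ N₁ N₂ : ℕ)
    (σ : ℤ × ℤ → ℂ)
    (Ψ : ℕ × ℕ → ℝ)
    (q : ℤ × ℤ → ℂ) (hq : Feas n₁ n₂ N₁ N₂ Ψ q)
    (Δ : ℤ × ℤ → ℂ) :
    -- the value of the second derivative
    let d : ℝ := (1 / ((N₁ : ℝ) * (N₂ : ℝ))) * ∑ ℓ ∈ gridN N₁ N₂,
      (trigQ n₁ n₂ Δ (zeta N₁ N₂ ℓ)).re ^ 2 /
        (1 / Ψ ℓ + (trigQ n₁ n₂ q (zeta N₁ N₂ ℓ)).re) ^ 2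
    HasDerivAt
      (deriv fun t : ℝ => Jdual n₁ n₂ N₁ N₂ σ Ψ (fun k => q k + (t : ℂ) * Δ k))
      d 0 ∧ 0 ≤ d := by
  intro d
  have hpos : ∀ ℓ ∈ gridN N₁ N₂, 0 < (1 / Ψ ℓ + (trigQ n₁ n₂ q (zeta N₁ N₂ ℓ)).re) +
      0 * (trigQ n₁ n₂ Δ (zeta N₁ N₂ ℓ)).re := by
    simpa using hq.2
  refine ⟨?_, ?_⟩
  · have hJ'' := hasDerivAt_deriv_affine_sub_sum_log (gridN N₁ N₂) _ _
      (∑ k ∈ Lam n₁ n₂, q k * starRingEnd ℂ (σ k)).re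
      (∑ k ∈ Lam n₁ n₂, Δ k * starRingEnd ℂ (σ k)).re (1 / ((N₁ : ℝ) * (N₂ : ℝ))) hpos
    simp only [zero_mul, add_zero] at hJ''
    simpa only [Jdual_add_mul] using hJ''
  · exact mul_nonneg (by positivity) (Finset.sum_nonneg fun ℓ _ => by positivity)

theorem stmt7 (n₁ n₂ N₁ N₂ : ℕ) (hn₁ : 0 < n₁) (hn₂ : 0 < n₂)
    (hN₁ : 0 < N₁) (hN₂ : 0 < N₂)
    (σ : ℤ × ℤ → ℂ) (hσ : ConjSym n₁ n₂ σ)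
    (Ψ : ℕ × ℕ → ℝ) (hΨ : ∀ ℓ ∈ gridN N₁ N₂, 0 < Ψ ℓ)
    (q : ℤ × ℤ → ℂ) (hq : Feas n₁ n₂ N₁ N₂ Ψ q)
    (Δ : ℤ × ℤ → ℂ) (hΔ : ConjSym n₁ n₂ Δ) :
    -- the value of the second derivative
    let d : ℝ := (1 / ((N₁ : ℝ) * (N₂ : ℝ))) * ∑ ℓ ∈ gridN N₁ N₂,
      (trigQ n₁ n₂ Δ (zeta N₁ N₂ ℓ)).re ^ 2 /
        (1 / Ψ ℓ + (trigQ n₁ n₂ q (zeta N₁ N₂ ℓ)).re) ^ 2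
    HasDerivAt
      (deriv fun t : ℝ => Jdual n₁ n₂ N₁ N₂ σ Ψ (fun k => q k + (t : ℂ) * Δ k))
      d 0 ∧ 0 ≤ d :=
  stmt7_general n₁ n₂ N₁ N₂ σ Ψ q hq Δ
end
end

section
/- Let σ : Λ → ℂ be conjugate-symmetric and Ψ : Z_N² → ℝ strictly positive, and let q̂ ∈ ℒ₊ with associated spectrum Φ̂(ℓ) = 1/(1/Ψ(ℓ) + Q̂(ζ_ℓ)). Then q̂ is a global minimizer of J on ℒ₊ if and only if Φ̂ satisfies the moment equations, i.e. σ_k = (1/(N₁N₂)) Σ_{ℓ∈Z_N²} exp(i(k₁ζ_{ℓ,1} + k₂ζ_{ℓ,2})) Φ̂(ℓ) for all k ∈ Λ. -/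
open Complex BigOperators

noncomputable section

/-- `Φ` satisfies the moment equations for covariance data `σ`. -/
def MomentEq (n₁ n₂ N₁ N₂ : ℕ) (σ : ℤ × ℤ → ℂ) (Φ : ℕ × ℕ → ℝ) : Prop :=
  ∀ k ∈ Lam n₁ n₂,
    σ k = ((1 / ((N₁ : ℝ) * (N₂ : ℝ)) : ℝ) : ℂ) * ∑ ℓ ∈ gridN N₁ N₂,
      Complex.exp (Complex.I *
        (((k.1 : ℝ) * (zeta N₁ N₂ ℓ).1 + (k.2 : ℝ) * (zeta N₁ N₂ ℓ).2 : ℝ) : ℂ)) *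
        ((Φ ℓ : ℝ) : ℂ)

/-- The spectrum `Φ̂ = (Ψ⁻¹ + Q̂)⁻¹` associated with dual variable `q`. -/
def PhiHat (n₁ n₂ N₁ N₂ : ℕ) (Ψ : ℕ × ℕ → ℝ) (q : ℤ × ℤ → ℂ) : ℕ × ℕ → ℝ :=
  fun ℓ => 1 / (1 / Ψ ℓ + (trigQ n₁ n₂ q (zeta N₁ N₂ ℓ)).re)

/-
`J` is a linear functional of `q` minus a nonnegative multiple of `∑ log (1/Ψ + Q(ζ_ℓ))`, and
`1/Ψ + Q(ζ_ℓ)` is affine in `q`; so `J` is convex on the open convex set `ℒ₊`, and `q̂` is a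
minimizer iff for every conjugate-symmetric direction `p` the derivative of `t ↦ J(q̂ + t p)`
at `0` vanishes (Fermat's rule one way, the tangent-line bound `log y - log x ≤ (y - x)/x` the
other). That derivative is `Re ⟨p, σ⟩ - Re ⟨p, m(Φ̂)⟩`, where `m(Φ̂)` is the moment sequence of
`Φ̂`. Both `σ` and `m(Φ̂)` are conjugate-symmetric, so `p = σ - m(Φ̂)` is an admissible
direction and turns the vanishing into `∑ |σ_k - m(Φ̂)_k|² = 0`.
-/

open Finset Filter Topology

lemma log_sub_log_le_sub_div {x y : ℝ} (hx : 0 < x) (hy : 0 < y) :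
    Real.log y - Real.log x ≤ (y - x) / x := by
  rw [← Real.log_div hy.ne' hx.ne', sub_div, div_self hx.ne']
  exact Real.log_le_sub_one_of_pos (div_pos hy hx)

lemma eventually_forall_pos_add_mul {ι : Type*} {s : Finset ι} {x : ι → ℝ}
    (hx : ∀ i ∈ s, 0 < x i) (y : ι → ℝ) : ∀ᶠ t in 𝓝 (0 : ℝ), ∀ i ∈ s, 0 < x i + t * y i := by
  rw [eventually_all_finset]
  intro i hi
  have hcont : Continuous fun t : ℝ => x i + t * y i := by fun_prop
  exact hcont.continuousAt.eventually_const_lt (by simpa using hx i hi)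

lemma hasDerivAt_sum_log_add_mul {ι : Type*} {s : Finset ι} {x : ι → ℝ}
    (hx : ∀ i ∈ s, x i ≠ 0) (y : ι → ℝ) :
    HasDerivAt (fun t => ∑ i ∈ s, Real.log (x i + t * y i)) (∑ i ∈ s, y i / x i) 0 := by
  refine HasDerivAt.fun_sum fun i hi => ?_
  have h := ((hasDerivAt_id (0 : ℝ)).mul_const (y i)).const_add (x i)
  simpa using h.log (by simpa using hx i hi)

def PhiHatInv (n₁ n₂ N₁ N₂ : ℕ) (Ψ : ℕ × ℕ → ℝ) (q : ℤ × ℤ → ℂ) (ℓ : ℕ × ℕ) : ℝ :=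
  1 / Ψ ℓ + (trigQ n₁ n₂ q (zeta N₁ N₂ ℓ)).re

def moment (N₁ N₂ : ℕ) (Φ : ℕ × ℕ → ℝ) (k : ℤ × ℤ) : ℂ :=
  ((1 / ((N₁ : ℝ) * (N₂ : ℝ)) : ℝ) : ℂ) * ∑ ℓ ∈ gridN N₁ N₂,
    Complex.exp (Complex.I *
      (((k.1 : ℝ) * (zeta N₁ N₂ ℓ).1 + (k.2 : ℝ) * (zeta N₁ N₂ ℓ).2 : ℝ) : ℂ)) * ((Φ ℓ : ℝ) : ℂ)

lemma momentEq_iff {n₁ n₂ N₁ N₂ : ℕ} {σ : ℤ × ℤ → ℂ} {Φ : ℕ × ℕ → ℝ} :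
    MomentEq n₁ n₂ N₁ N₂ σ Φ ↔ ∀ k ∈ Lam n₁ n₂, σ k = moment N₁ N₂ Φ k :=
  Iff.rfl

lemma ConjSym.sub {n₁ n₂ : ℕ} {p q : ℤ × ℤ → ℂ} (hp : ConjSym n₁ n₂ p) (hq : ConjSym n₁ n₂ q) :
    ConjSym n₁ n₂ (p - q) := fun k hk => by
  simp [hp k hk, hq k hk]

lemma ConjSym.add_real_smul {n₁ n₂ : ℕ} {p q : ℤ × ℤ → ℂ} (hq : ConjSym n₁ n₂ q)
    (hp : ConjSym n₁ n₂ p) (t : ℝ) : ConjSym n₁ n₂ (fun j => q j + t * p j) := fun k hk => by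
  simp [hp k hk, hq k hk]

lemma conjSym_moment (n₁ n₂ N₁ N₂ : ℕ) (Φ : ℕ × ℕ → ℝ) : ConjSym n₁ n₂ (moment N₁ N₂ Φ) :=
  fun k _ => by
  simp only [moment, map_mul, map_sum, ← Complex.exp_conj, Complex.conj_ofReal, Complex.conj_I,
    Prod.fst_neg, Prod.snd_neg, Int.cast_neg]
  push_cast
  ring_nf

lemma sum_mul_conj_moment (n₁ n₂ N₁ N₂ : ℕ) (Φ : ℕ × ℕ → ℝ) (p : ℤ × ℤ → ℂ) :
    ∑ k ∈ Lam n₁ n₂, p k * starRingEnd ℂ (moment N₁ N₂ Φ k) =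
      ((1 / ((N₁ : ℝ) * (N₂ : ℝ)) : ℝ) : ℂ) *
        ∑ ℓ ∈ gridN N₁ N₂, trigQ n₁ n₂ p (zeta N₁ N₂ ℓ) * ((Φ ℓ : ℝ) : ℂ) := by
  simp only [moment, trigQ, map_mul, map_sum, ← Complex.exp_conj, Complex.conj_ofReal,
    Complex.conj_I, mul_sum, sum_mul]
  rw [sum_comm]
  refine sum_congr rfl fun ℓ _ => sum_congr rfl fun k _ => ?_
  push_cast
  ring_nf

lemma eqOn_Lam_of_re_sum_mul_conj_eq {n₁ n₂ : ℕ} {σ τ : ℤ × ℤ → ℂ} (hσ : ConjSym n₁ n₂ σ)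
    (hτ : ConjSym n₁ n₂ τ)
    (h : ∀ p, ConjSym n₁ n₂ p → (∑ k ∈ Lam n₁ n₂, p k * starRingEnd ℂ (σ k)).re =
      (∑ k ∈ Lam n₁ n₂, p k * starRingEnd ℂ (τ k)).re) :
    ∀ k ∈ Lam n₁ n₂, σ k = τ k := by
  have hsq : ∑ k ∈ Lam n₁ n₂, Complex.normSq (σ k - τ k) = 0 := by
    have := h (σ - τ) (hσ.sub hτ)
    rw [← sub_eq_zero, ← Complex.sub_re, ← sum_sub_distrib] at this
    simpa only [Pi.sub_apply, ← mul_sub, ← map_sub, Complex.mul_conj, ← Complex.ofReal_sum,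
      Complex.ofReal_re] using this
  intro k hk
  rw [sum_eq_zero_iff_of_nonneg fun k _ => Complex.normSq_nonneg _] at hsq
  exact sub_eq_zero.1 (Complex.normSq_eq_zero.1 (hsq k hk))

lemma re_sum_mul_conj_moment (n₁ n₂ N₁ N₂ : ℕ) (Φ : ℕ × ℕ → ℝ) (p : ℤ × ℤ → ℂ) :
    (∑ k ∈ Lam n₁ n₂, p k * starRingEnd ℂ (moment N₁ N₂ Φ k)).re =
      1 / ((N₁ : ℝ) * (N₂ : ℝ)) * ∑ ℓ ∈ gridN N₁ N₂, (trigQ n₁ n₂ p (zeta N₁ N₂ ℓ)).re * Φ ℓ := by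
  simp only [sum_mul_conj_moment, Complex.re_ofReal_mul, Complex.re_sum, Complex.re_mul_ofReal]

lemma trigQ_add_real_smul (n₁ n₂ : ℕ) (q p : ℤ × ℤ → ℂ) (t : ℝ) (θ : ℝ × ℝ) :
    trigQ n₁ n₂ (fun j => q j + t * p j) θ = trigQ n₁ n₂ q θ + t * trigQ n₁ n₂ p θ := by
  simp only [trigQ, add_mul, sum_add_distrib, mul_sum, mul_assoc]

lemma PhiHatInv_add_real_smul (n₁ n₂ N₁ N₂ : ℕ) (Ψ : ℕ × ℕ → ℝ) (q p : ℤ × ℤ → ℂ) (t : ℝ)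
    (ℓ : ℕ × ℕ) :
    PhiHatInv n₁ n₂ N₁ N₂ Ψ (fun j => q j + t * p j) ℓ =
      PhiHatInv n₁ n₂ N₁ N₂ Ψ q ℓ + t * (trigQ n₁ n₂ p (zeta N₁ N₂ ℓ)).re := by
  simp only [PhiHatInv, trigQ_add_real_smul, Complex.add_re, Complex.re_ofReal_mul, add_assoc]

lemma Jdual_add_real_smul (n₁ n₂ N₁ N₂ : ℕ) (σ : ℤ × ℤ → ℂ) (Ψ : ℕ × ℕ → ℝ)
    (q p : ℤ × ℤ → ℂ) (t : ℝ) :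
    Jdual n₁ n₂ N₁ N₂ σ Ψ (fun j => q j + t * p j) =
      (∑ k ∈ Lam n₁ n₂, q k * starRingEnd ℂ (σ k)).re +
        t * (∑ k ∈ Lam n₁ n₂, p k * starRingEnd ℂ (σ k)).re -
        1 / ((N₁ : ℝ) * (N₂ : ℝ)) * ∑ ℓ ∈ gridN N₁ N₂,
          Real.log (PhiHatInv n₁ n₂ N₁ N₂ Ψ q ℓ + t * (trigQ n₁ n₂ p (zeta N₁ N₂ ℓ)).re) := by
  simp only [Jdual, ← PhiHatInv_add_real_smul, add_mul, sum_add_distrib, mul_assoc, ← mul_sum,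
    Complex.add_re, Complex.re_ofReal_mul]
  rfl

lemma Feas.add_real_smul {n₁ n₂ N₁ N₂ : ℕ} {Ψ : ℕ × ℕ → ℝ} {q p : ℤ × ℤ → ℂ}
    (hq : Feas n₁ n₂ N₁ N₂ Ψ q) (hp : ConjSym n₁ n₂ p) {t : ℝ}
    (ht : ∀ ℓ ∈ gridN N₁ N₂,
      0 < PhiHatInv n₁ n₂ N₁ N₂ Ψ q ℓ + t * (trigQ n₁ n₂ p (zeta N₁ N₂ ℓ)).re) :
    Feas n₁ n₂ N₁ N₂ Ψ (fun j => q j + t * p j) :=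
  ⟨hq.1.add_real_smul hp t, fun ℓ hℓ => (PhiHatInv_add_real_smul .. ▸ ht ℓ hℓ :)⟩

section Stationarity

variable {n₁ n₂ N₁ N₂ : ℕ} {σ : ℤ × ℤ → ℂ} {Ψ : ℕ × ℕ → ℝ} {qhat : ℤ × ℤ → ℂ}

lemma re_sum_mul_conj_eq_of_forall_Jdual_le (hqhat : Feas n₁ n₂ N₁ N₂ Ψ qhat)
    (hmin : ∀ q, Feas n₁ n₂ N₁ N₂ Ψ q → Jdual n₁ n₂ N₁ N₂ σ Ψ qhat ≤ Jdual n₁ n₂ N₁ N₂ σ Ψ q)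
    {p : ℤ × ℤ → ℂ} (hp : ConjSym n₁ n₂ p) :
    (∑ k ∈ Lam n₁ n₂, p k * starRingEnd ℂ (σ k)).re = 1 / ((N₁ : ℝ) * (N₂ : ℝ)) *
      ∑ ℓ ∈ gridN N₁ N₂, (trigQ n₁ n₂ p (zeta N₁ N₂ ℓ)).re * PhiHat n₁ n₂ N₁ N₂ Ψ qhat ℓ := by
  set x := PhiHatInv n₁ n₂ N₁ N₂ Ψ qhat
  set y := fun ℓ => (trigQ n₁ n₂ p (zeta N₁ N₂ ℓ)).re
  set J := fun t : ℝ => Jdual n₁ n₂ N₁ N₂ σ Ψ (fun j => qhat j + t * p j)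
  have hloc : IsLocalMin J 0 := by
    filter_upwards [eventually_forall_pos_add_mul (x := x) hqhat.2 y] with t ht
    simpa [J] using hmin _ (hqhat.add_real_smul hp ht)
  have hderiv : HasDerivAt J ((∑ k ∈ Lam n₁ n₂, p k * starRingEnd ℂ (σ k)).re -
      1 / ((N₁ : ℝ) * (N₂ : ℝ)) * ∑ ℓ ∈ gridN N₁ N₂, y ℓ / x ℓ) 0 := by
    have hJ : J = fun t => (∑ k ∈ Lam n₁ n₂, qhat k * starRingEnd ℂ (σ k)).re +
        t * (∑ k ∈ Lam n₁ n₂, p k * starRingEnd ℂ (σ k)).re -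
        1 / ((N₁ : ℝ) * (N₂ : ℝ)) * ∑ ℓ ∈ gridN N₁ N₂, Real.log (x ℓ + t * y ℓ) :=
      funext (Jdual_add_real_smul n₁ n₂ N₁ N₂ σ Ψ qhat p)
    rw [hJ]
    exact ((hasDerivAt_mul_const _).const_add _).sub
      ((hasDerivAt_sum_log_add_mul (fun ℓ hℓ => (hqhat.2 ℓ hℓ).ne') y).const_mul _)
  rw [sub_eq_zero.1 (hloc.hasDerivAt_eq_zero hderiv)]
  exact congrArg _ (sum_congr rfl fun ℓ _ => div_eq_mul_one_div _ _)

lemma Jdual_le_of_re_sum_mul_conj_eq (hqhat : Feas n₁ n₂ N₁ N₂ Ψ qhat)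
    (hstat : ∀ p, ConjSym n₁ n₂ p → (∑ k ∈ Lam n₁ n₂, p k * starRingEnd ℂ (σ k)).re =
      1 / ((N₁ : ℝ) * (N₂ : ℝ)) *
        ∑ ℓ ∈ gridN N₁ N₂, (trigQ n₁ n₂ p (zeta N₁ N₂ ℓ)).re * PhiHat n₁ n₂ N₁ N₂ Ψ qhat ℓ)
    {q : ℤ × ℤ → ℂ} (hq : Feas n₁ n₂ N₁ N₂ Ψ q) :
    Jdual n₁ n₂ N₁ N₂ σ Ψ qhat ≤ Jdual n₁ n₂ N₁ N₂ σ Ψ q := by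
  set p := q - qhat
  set x := PhiHatInv n₁ n₂ N₁ N₂ Ψ qhat
  set y := fun ℓ => (trigQ n₁ n₂ p (zeta N₁ N₂ ℓ)).re
  have hxy : ∀ ℓ, PhiHatInv n₁ n₂ N₁ N₂ Ψ q ℓ = x ℓ + y ℓ := by
    simpa [p] using PhiHatInv_add_real_smul n₁ n₂ N₁ N₂ Ψ qhat p 1
  have hJq : Jdual n₁ n₂ N₁ N₂ σ Ψ q = (∑ k ∈ Lam n₁ n₂, qhat k * starRingEnd ℂ (σ k)).re +
      (∑ k ∈ Lam n₁ n₂, p k * starRingEnd ℂ (σ k)).re -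
      1 / ((N₁ : ℝ) * (N₂ : ℝ)) * ∑ ℓ ∈ gridN N₁ N₂, Real.log (x ℓ + y ℓ) := by
    simpa [p] using Jdual_add_real_smul n₁ n₂ N₁ N₂ σ Ψ qhat p 1
  have hlog : ∀ ℓ ∈ gridN N₁ N₂, Real.log (x ℓ + y ℓ) - Real.log (x ℓ) ≤
      y ℓ * PhiHat n₁ n₂ N₁ N₂ Ψ qhat ℓ := by
    intro ℓ hℓ
    have h := log_sub_log_le_sub_div (x := x ℓ) (hqhat.2 ℓ hℓ) ((hq.2 ℓ hℓ).trans_eq (hxy ℓ))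
    rwa [add_sub_cancel_left, div_eq_mul_one_div] at h
  have hsum := mul_le_mul_of_nonneg_left (sum_le_sum hlog)
    (by positivity : (0 : ℝ) ≤ 1 / ((N₁ : ℝ) * (N₂ : ℝ)))
  rw [sum_sub_distrib, ← hstat p (hq.1.sub hqhat.1)] at hsum
  have hJqhat : Jdual n₁ n₂ N₁ N₂ σ Ψ qhat =
      (∑ k ∈ Lam n₁ n₂, qhat k * starRingEnd ℂ (σ k)).re -
        1 / ((N₁ : ℝ) * (N₂ : ℝ)) * ∑ ℓ ∈ gridN N₁ N₂, Real.log (x ℓ) := rfl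
  rw [hJq, hJqhat]
  linarith

end Stationarity

theorem stmt11_general (n₁ n₂ N₁ N₂ : ℕ)
    (σ : ℤ × ℤ → ℂ) (hσ : ConjSym n₁ n₂ σ)
    (Ψ : ℕ × ℕ → ℝ)
    (qhat : ℤ × ℤ → ℂ) (hqhat : Feas n₁ n₂ N₁ N₂ Ψ qhat) :
    (∀ q : ℤ × ℤ → ℂ, Feas n₁ n₂ N₁ N₂ Ψ q →
        Jdual n₁ n₂ N₁ N₂ σ Ψ qhat ≤ Jdual n₁ n₂ N₁ N₂ σ Ψ q) ↔
      MomentEq n₁ n₂ N₁ N₂ σ (PhiHat n₁ n₂ N₁ N₂ Ψ qhat) := by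
  rw [momentEq_iff]
  constructor
  · intro hmin
    refine eqOn_Lam_of_re_sum_mul_conj_eq hσ (conjSym_moment n₁ n₂ N₁ N₂ _) fun p hp => ?_
    rw [re_sum_mul_conj_eq_of_forall_Jdual_le hqhat hmin hp, re_sum_mul_conj_moment]
  · intro hM q hq
    refine Jdual_le_of_re_sum_mul_conj_eq hqhat (fun p _ => ?_) hq
    rw [sum_congr rfl fun k hk => by rw [hM k hk], re_sum_mul_conj_moment]

theorem stmt11 (n₁ n₂ N₁ N₂ : ℕ) (hn₁ : 0 < n₁) (hn₂ : 0 < n₂)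
    (hN₁ : 0 < N₁) (hN₂ : 0 < N₂)
    (σ : ℤ × ℤ → ℂ) (hσ : ConjSym n₁ n₂ σ)
    (Ψ : ℕ × ℕ → ℝ) (hΨ : ∀ ℓ ∈ gridN N₁ N₂, 0 < Ψ ℓ)
    (qhat : ℤ × ℤ → ℂ) (hqhat : Feas n₁ n₂ N₁ N₂ Ψ qhat) :
    (∀ q : ℤ × ℤ → ℂ, Feas n₁ n₂ N₁ N₂ Ψ q →
        Jdual n₁ n₂ N₁ N₂ σ Ψ qhat ≤ Jdual n₁ n₂ N₁ N₂ σ Ψ q) ↔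
      MomentEq n₁ n₂ N₁ N₂ σ (PhiHat n₁ n₂ N₁ N₂ Ψ qhat) :=
  stmt11_general n₁ n₂ N₁ N₂ σ hσ Ψ qhat hqhat

end
end

section
/- Let σ : Λ → ℂ be conjugate-symmetric and Ψ : Z_N² → ℝ strictly positive. Suppose q̂ ∈ ℒ₊ is such that Φ̂(ℓ) = 1/(1/Ψ(ℓ) + Q̂(ζ_ℓ)) satisfies the moment equations for σ. Then Φ̂ is the unique minimizer of the primal problem: for every strictly positive Φ : Z_N² → ℝ satisfying the moment equations for σ, one has D_N(Φ,Ψ) ≥ D_N(Φ̂,Ψ), with equality if and only if Φ = Φ̂. -/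
/-!
With `p = 1/Ψ + Q̂` and `Φ̂ = 1/p`, a direct computation gives, at every grid point,
`log (Ψ/Φ) + (Φ - Ψ)/Ψ - (log (Ψ/Φ̂) + (Φ̂ - Ψ)/Ψ) = (Φ p - 1 - log (Φ p)) - Q̂ (Φ - Φ̂)`.
Summed over the grid, the last term vanishes: `Q̂` is a trigonometric polynomial with frequencies
in `Λ`, and `Φ`, `Φ̂` have the same moments on `Λ`. Hence `D_N(Φ,Ψ) - D_N(Φ̂,Ψ)` is the mean of
`t - 1 - log t ≥ 0` at `t = Φ p`, which vanishes only if `Φ p = 1`, that is `Φ = Φ̂`.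
-/

open Complex BigOperators

noncomputable section

/-- The discrete Itakura–Saito pseudodistance between `Φ` and `Ψ` on the grid. -/
def DIS (N₁ N₂ : ℕ) (Φ Ψ : ℕ × ℕ → ℝ) : ℝ :=
  (1 / ((N₁ : ℝ) * (N₂ : ℝ))) *
    ∑ ℓ ∈ gridN N₁ N₂, (Real.log (Ψ ℓ / Φ ℓ) + (Φ ℓ - Ψ ℓ) / Ψ ℓ)

open Finset

namespace Real

lemma sub_one_sub_log_nonneg {x : ℝ} (hx : 0 < x) : 0 ≤ x - 1 - log x := by
  linarith [log_le_sub_one_of_pos hx]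

lemma sub_one_sub_log_eq_zero_iff {x : ℝ} (hx : 0 < x) : x - 1 - log x = 0 ↔ x = 1 := by
  refine ⟨fun h => ?_, fun h => by simp [h]⟩
  by_contra hne
  linarith [log_lt_sub_one_of_pos hx hne]

end Real

def itakuraSaito (x y : ℝ) : ℝ := Real.log (y / x) + (x - y) / y

lemma DIS_eq_mul_sum_itakuraSaito (N₁ N₂ : ℕ) (Φ Ψ : ℕ × ℕ → ℝ) :
    DIS N₁ N₂ Φ Ψ = 1 / ((N₁ : ℝ) * N₂) * ∑ ℓ ∈ gridN N₁ N₂, itakuraSaito (Φ ℓ) (Ψ ℓ) :=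
  rfl

lemma itakuraSaito_sub_itakuraSaito_one_div {x y p : ℝ} (hx : 0 < x) (hy : 0 < y) (hp : 0 < p) :
    itakuraSaito x y - itakuraSaito (1 / p) y
      = (x * p - 1 - Real.log (x * p)) - (p - 1 / y) * (x - 1 / p) := by
  unfold itakuraSaito
  rw [Real.log_div hy.ne' hx.ne', Real.log_div hy.ne' (by positivity), Real.log_mul hx.ne' hp.ne',
    one_div p, Real.log_inv]
  field_simp
  ring

lemma sum_itakuraSaito_sub_sum_itakuraSaito_one_div {ι : Type*} (s : Finset ι) {Φ Ψ p : ι → ℝ}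
    (hΦ : ∀ i ∈ s, 0 < Φ i) (hΨ : ∀ i ∈ s, 0 < Ψ i) (hp : ∀ i ∈ s, 0 < p i)
    (horth : ∑ i ∈ s, (p i - 1 / Ψ i) * (Φ i - 1 / p i) = 0) :
    ∑ i ∈ s, itakuraSaito (Φ i) (Ψ i) - ∑ i ∈ s, itakuraSaito (1 / p i) (Ψ i)
      = ∑ i ∈ s, (Φ i * p i - 1 - Real.log (Φ i * p i)) := by
  rw [← sum_sub_distrib, sum_congr rfl fun i hi =>
    itakuraSaito_sub_itakuraSaito_one_div (hΦ i hi) (hΨ i hi) (hp i hi), sum_sub_distrib, horth,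
    sub_zero]

theorem sum_itakuraSaito_one_div_le_and_eq_iff {ι : Type*} (s : Finset ι) {Φ Ψ p : ι → ℝ}
    (hΦ : ∀ i ∈ s, 0 < Φ i) (hΨ : ∀ i ∈ s, 0 < Ψ i) (hp : ∀ i ∈ s, 0 < p i)
    (horth : ∑ i ∈ s, (p i - 1 / Ψ i) * (Φ i - 1 / p i) = 0) :
    ∑ i ∈ s, itakuraSaito (1 / p i) (Ψ i) ≤ ∑ i ∈ s, itakuraSaito (Φ i) (Ψ i) ∧
      (∑ i ∈ s, itakuraSaito (Φ i) (Ψ i) = ∑ i ∈ s, itakuraSaito (1 / p i) (Ψ i) ↔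
        ∀ i ∈ s, Φ i = 1 / p i) := by
  have hpos : ∀ i ∈ s, 0 < Φ i * p i := fun i hi => mul_pos (hΦ i hi) (hp i hi)
  have hgap := sum_itakuraSaito_sub_sum_itakuraSaito_one_div s hΦ hΨ hp horth
  have hnonneg : ∀ i ∈ s, 0 ≤ Φ i * p i - 1 - Real.log (Φ i * p i) := fun i hi =>
    Real.sub_one_sub_log_nonneg (hpos i hi)
  refine ⟨sub_nonneg.mp (hgap ▸ sum_nonneg hnonneg), ?_⟩
  rw [← sub_eq_zero, hgap, sum_eq_zero_iff_of_nonneg hnonneg]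
  refine forall₂_congr fun i hi => ?_
  rw [Real.sub_one_sub_log_eq_zero_iff (hpos i hi), eq_div_iff (hp i hi).ne']

lemma neg_mem_Lam {n₁ n₂ : ℕ} {k : ℤ × ℤ} (hk : k ∈ Lam n₁ n₂) : -k ∈ Lam n₁ n₂ := by
  simp only [Lam, mem_product, mem_Icc, Prod.fst_neg, Prod.snd_neg] at hk ⊢
  omega

lemma MomentEq.sum_trigQ_mul_sub_eq_zero {n₁ n₂ N₁ N₂ : ℕ} (hN₁ : 0 < N₁) (hN₂ : 0 < N₂)
    {σ : ℤ × ℤ → ℂ} {Φ Φ' : ℕ × ℕ → ℝ} (hΦ : MomentEq n₁ n₂ N₁ N₂ σ Φ)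
    (hΦ' : MomentEq n₁ n₂ N₁ N₂ σ Φ') (q : ℤ × ℤ → ℂ) :
    ∑ ℓ ∈ gridN N₁ N₂, (trigQ n₁ n₂ q (zeta N₁ N₂ ℓ)).re * (Φ ℓ - Φ' ℓ) = 0 := by
  have hc : ((1 / ((N₁ : ℝ) * N₂) : ℝ) : ℂ) ≠ 0 := by
    have : (0 : ℝ) < 1 / ((N₁ : ℝ) * N₂) := by positivity
    exact_mod_cast this.ne'
  -- the `k`-th term of `Q` pairs `Φ - Φ'` with the moment of index `-k ∈ Λ`
  have hmoment : ∀ k ∈ Lam n₁ n₂, ∑ ℓ ∈ gridN N₁ N₂,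
      exp (-I * (((k.1 : ℝ) * (zeta N₁ N₂ ℓ).1 + (k.2 : ℝ) * (zeta N₁ N₂ ℓ).2 : ℝ) : ℂ)) *
        ((Φ ℓ - Φ' ℓ : ℝ) : ℂ) = 0 := by
    intro k hk
    have h := mul_left_cancel₀ hc
      ((hΦ (-k) (neg_mem_Lam hk)).symm.trans (hΦ' (-k) (neg_mem_Lam hk)))
    have hexp : ∀ θ : ℝ × ℝ, exp (I * ((((-k).1 : ℝ) * θ.1 + ((-k).2 : ℝ) * θ.2 : ℝ) : ℂ))
        = exp (-I * (((k.1 : ℝ) * θ.1 + (k.2 : ℝ) * θ.2 : ℝ) : ℂ)) := fun θ => by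
      congr 1
      push_cast [Prod.fst_neg, Prod.snd_neg]
      ring
    simp only [hexp] at h
    simp only [ofReal_sub, mul_sub, sum_sub_distrib, h, sub_self]
  have hcomplex : ∑ ℓ ∈ gridN N₁ N₂,
      trigQ n₁ n₂ q (zeta N₁ N₂ ℓ) * ((Φ ℓ - Φ' ℓ : ℝ) : ℂ) = 0 := by
    simp only [trigQ, sum_mul, mul_assoc]
    rw [sum_comm]
    exact sum_eq_zero fun k hk => by rw [← mul_sum, hmoment k hk, mul_zero]
  simpa [re_sum, mul_re] using congrArg re hcomplex

theorem stmt12_general (n₁ n₂ N₁ N₂ : ℕ)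
    (hN₁ : 0 < N₁) (hN₂ : 0 < N₂)
    (σ : ℤ × ℤ → ℂ)
    (Ψ : ℕ × ℕ → ℝ) (hΨ : ∀ ℓ ∈ gridN N₁ N₂, 0 < Ψ ℓ)
    (qhat : ℤ × ℤ → ℂ) (hqhat : Feas n₁ n₂ N₁ N₂ Ψ qhat)
    (hmom : MomentEq n₁ n₂ N₁ N₂ σ (PhiHat n₁ n₂ N₁ N₂ Ψ qhat)) :
    ∀ Φ : ℕ × ℕ → ℝ, (∀ ℓ ∈ gridN N₁ N₂, 0 < Φ ℓ) →
      MomentEq n₁ n₂ N₁ N₂ σ Φ →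
      DIS N₁ N₂ (PhiHat n₁ n₂ N₁ N₂ Ψ qhat) Ψ ≤ DIS N₁ N₂ Φ Ψ ∧
        (DIS N₁ N₂ Φ Ψ = DIS N₁ N₂ (PhiHat n₁ n₂ N₁ N₂ Ψ qhat) Ψ ↔
          ∀ ℓ ∈ gridN N₁ N₂, Φ ℓ = PhiHat n₁ n₂ N₁ N₂ Ψ qhat ℓ) := by
  intro Φ hΦ hmomΦ
  set p : ℕ × ℕ → ℝ := fun ℓ => 1 / Ψ ℓ + (trigQ n₁ n₂ qhat (zeta N₁ N₂ ℓ)).re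
  have horth : ∑ ℓ ∈ gridN N₁ N₂, (p ℓ - 1 / Ψ ℓ) * (Φ ℓ - 1 / p ℓ) = 0 := by
    simp only [p, add_sub_cancel_left]
    exact hmomΦ.sum_trigQ_mul_sub_eq_zero hN₁ hN₂ hmom qhat
  obtain ⟨hle, hiff⟩ := sum_itakuraSaito_one_div_le_and_eq_iff _ hΦ hΨ hqhat.2 horth
  have hc : 0 < 1 / ((N₁ : ℝ) * N₂) := by positivity
  simp only [DIS_eq_mul_sum_itakuraSaito, PhiHat]
  exact ⟨mul_le_mul_of_nonneg_left hle hc.le, (mul_right_inj' hc.ne').trans hiff⟩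

theorem stmt12 (n₁ n₂ N₁ N₂ : ℕ) (hn₁ : 0 < n₁) (hn₂ : 0 < n₂)
    (hN₁ : 0 < N₁) (hN₂ : 0 < N₂)
    (σ : ℤ × ℤ → ℂ) (hσ : ConjSym n₁ n₂ σ)
    (Ψ : ℕ × ℕ → ℝ) (hΨ : ∀ ℓ ∈ gridN N₁ N₂, 0 < Ψ ℓ)
    (qhat : ℤ × ℤ → ℂ) (hqhat : Feas n₁ n₂ N₁ N₂ Ψ qhat)
    (hmom : MomentEq n₁ n₂ N₁ N₂ σ (PhiHat n₁ n₂ N₁ N₂ Ψ qhat)) :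
    ∀ Φ : ℕ × ℕ → ℝ, (∀ ℓ ∈ gridN N₁ N₂, 0 < Φ ℓ) →
      MomentEq n₁ n₂ N₁ N₂ σ Φ →
      DIS N₁ N₂ (PhiHat n₁ n₂ N₁ N₂ Ψ qhat) Ψ ≤ DIS N₁ N₂ Φ Ψ ∧
        (DIS N₁ N₂ Φ Ψ = DIS N₁ N₂ (PhiHat n₁ n₂ N₁ N₂ Ψ qhat) Ψ ↔
          ∀ ℓ ∈ gridN N₁ N₂, Φ ℓ = PhiHat n₁ n₂ N₁ N₂ Ψ qhat ℓ) :=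
  stmt12_general n₁ n₂ N₁ N₂ hN₁ hN₂ σ Ψ hΨ qhat hqhat hmom

end
end
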